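/- arXiv:2604.27227 — 2 statements merged into one kernel-verified Lean document; each statement's English description precedes it below -/
import Mathlib

section
/- Let 𝒢 = (V, ℰ) be a temporal digraph on n vertices whose footprint has cc connected components, and let p = |ℰ| + cc − n. Then p ≥ 0 and there exists a set S ⊆ V with |S| ≤ p that is a directed feedback vertex set of the reachability graph Reach(𝒢). -/
/-! Common definitions: temporal (di)graphs, journeys, footprints,
closed walks, the walk-Helly property, tree representations, etc. -/

variable {V : Type*}

/-- Underlying undirected simple graph of a digraph given by its arc relation. -/
def underGraph (A : V → V → Prop) : SimpleGraph V where
  Adj u v := u ≠ v ∧ (A u v ∨ A v u)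
  symm := ⟨fun _ _ h => ⟨h.1.symm, h.2.symm⟩⟩
  loopless := ⟨fun _ h => h.1 rfl⟩

/-- Number of connected components of a digraph (components of the underlying graph). -/
noncomputable def numComponents (A : V → V → Prop) : ℕ :=
  Nat.card (underGraph A).ConnectedComponent

/-- A directed circuit: a closed directed walk whose vertices are pairwise
distinct except for the repeated endpoint. -/
def IsCircuit (A : V → V → Prop) (k : ℕ) (w : ℕ → V) : Prop :=
  1 ≤ k ∧ w k = w 0 ∧ (∀ i < k, A (w i) (w (i + 1))) ∧
    ∀ i < k, ∀ j < k, w i = w j → i = j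

/-- A directed feedback vertex set: every circuit contains a vertex of `S`. -/
def IsDFVS (A : V → V → Prop) (S : Set V) : Prop :=
  ∀ (k : ℕ) (w : ℕ → V), IsCircuit A k w → ∃ i < k, w i ∈ S

/-- A valid finite set of temporal arcs: distinct endpoints, positive times. -/
def ValidDiTemporal (E : Finset ((V × V) × ℕ)) : Prop :=
  ∀ e ∈ E, e.1.1 ≠ e.1.2 ∧ 1 ≤ e.2

/-- A (strict) journey from `u` to `v` in a temporal digraph with arc set `E`. -/
def DiJourney (E : Set ((V × V) × ℕ)) (u v : V) : Prop :=
  ∃ (k : ℕ) (w : ℕ → V) (t : ℕ → ℕ),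
    1 ≤ k ∧ w 0 = u ∧ w k = v ∧
    (∀ i < k, ((w i, w (i + 1)), t i) ∈ E) ∧
    (∀ i, i + 1 < k → t i < t (i + 1))

/-- Arcs of the reachability graph of a temporal digraph. -/
def reachArc (E : Set ((V × V) × ℕ)) (u v : V) : Prop :=
  u ≠ v ∧ DiJourney E u v

/-- Arcs of the (directed) footprint of a temporal digraph. -/
def footArc (E : Set ((V × V) × ℕ)) (u v : V) : Prop :=
  ∃ t, ((u, v), t) ∈ E

/-- A valid finite set of undirected temporal edges: non-loop edges, positive times. -/
def ValidTemporal (E : Finset (Sym2 V × ℕ)) : Prop :=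
  ∀ e ∈ E, ¬ e.1.IsDiag ∧ 1 ≤ e.2

/-- A (strict) journey from `u` to `v` in an undirected temporal graph with edge set `E`. -/
def Journey (E : Set (Sym2 V × ℕ)) (u v : V) : Prop :=
  ∃ (k : ℕ) (w : ℕ → V) (t : ℕ → ℕ),
    1 ≤ k ∧ w 0 = u ∧ w k = v ∧
    (∀ i < k, (s(w i, w (i + 1)), t i) ∈ E) ∧
    (∀ i, i + 1 < k → t i < t (i + 1))

/-- The temporal graph with edge set `E` satisfies the request graph `A`. -/
def Satisfies (E : Set (Sym2 V × ℕ)) (A : V → V → Prop) : Prop :=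
  ∀ u v : V, A u v → Journey E u v

/-- Footprint of an undirected temporal graph. -/
def footprint (E : Set (Sym2 V × ℕ)) : SimpleGraph V where
  Adj u v := u ≠ v ∧ ∃ t, (s(u, v), t) ∈ E
  symm := by
    refine ⟨?_⟩
    intro u v h
    obtain ⟨h1, t, ht⟩ := h
    exact ⟨h1.symm, t, by rwa [Sym2.eq_swap]⟩
  loopless := ⟨fun _ h => h.1 rfl⟩

/-- A tree solution for the request graph `A`: a valid temporal graph satisfying
all the requests and whose footprint is a tree on the whole vertex set. -/
def IsTreeSolution (E : Finset (Sym2 V × ℕ)) (A : V → V → Prop) : Prop :=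
  ValidTemporal E ∧ Satisfies (↑E : Set (Sym2 V × ℕ)) A ∧
    (footprint (↑E : Set (Sym2 V × ℕ))).IsTree

/-- A closed directed walk of length `k ≥ 1` in the digraph `A`. -/
def IsClosedWalk (A : V → V → Prop) (k : ℕ) (w : ℕ → V) : Prop :=
  1 ≤ k ∧ w k = w 0 ∧ ∀ i < k, A (w i) (w (i + 1))

/-- Vertex set of a walk of length `k`. -/
def walkSet (k : ℕ) (w : ℕ → V) : Set V := {x | ∃ i < k, w i = x}

/-- `S` is the vertex set of some closed walk of `A`. -/
def IsWalkSet (A : V → V → Prop) (S : Set V) : Prop :=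
  ∃ (k : ℕ) (w : ℕ → V), IsClosedWalk A k w ∧ S = walkSet k w

/-- The digraph `A` is walk-Helly: every (nonempty) family of vertex sets of
closed walks that pairwise intersect has a common vertex. -/
def WalkHelly (A : V → V → Prop) : Prop :=
  ∀ 𝒮 : Set (Set V), 𝒮.Nonempty → (∀ S ∈ 𝒮, IsWalkSet A S) →
    (∀ S ∈ 𝒮, ∀ S' ∈ 𝒮, (S ∩ S').Nonempty) → (⋂₀ 𝒮).Nonempty

/-- A tree representation of the digraph `A`: a tree on the vertex set such that the
vertex set of every closed walk of `A` induces a connected subgraph. -/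
def IsTreeRep (A : V → V → Prop) (T : SimpleGraph V) : Prop :=
  T.IsTree ∧ ∀ S : Set V, IsWalkSet A S → (T.induce S).Connected

/-- `(u, v)` is an authorized arc of `A`: there is no vertex `x` lying both on a
closed walk through `u` avoiding `v` and on a closed walk through `v` avoiding `u`. -/
def IsAuthorized (A : V → V → Prop) (u v : V) : Prop :=
  ¬ ∃ x : V, (∃ S, IsWalkSet A S ∧ u ∈ S ∧ x ∈ S ∧ v ∉ S) ∧
             (∃ S, IsWalkSet A S ∧ v ∈ S ∧ x ∈ S ∧ u ∉ S)

/-- The undirected graph of forced edges of `A` (pairs with arcs in both directions). -/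
def forcedGraph (A : V → V → Prop) : SimpleGraph V where
  Adj u v := u ≠ v ∧ A u v ∧ A v u
  symm := ⟨fun _ _ h => ⟨h.1.symm, h.2.2, h.2.1⟩⟩
  loopless := ⟨fun _ h => h.1 rfl⟩

/-!
Induction on the arcs, adding at each step an arc `e = ((a, b), t)` of maximal time. Such an arc
can only be the last arc of a journey, so every new journey ends at `b` and, before `e`, connects
its start to `a` in the old footprint. If `a` and `b` were already connected in the footprint, the
number of components does not change, and adding `b` to the feedback vertex set destroys every new
circuit. Otherwise the number of components drops by one, and no circuit of the reachability graph
can use `e` at all: following the rest of the circuit from `b` back to its start would connect `b`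
to `a` without `e`.
-/

namespace SimpleGraph

variable {G G' : SimpleGraph V} {a b u v : V}

lemma reachable_of_forall_reachable_succ {w : ℕ → V} {m n : ℕ} (hmn : m ≤ n)
    (h : ∀ j, m ≤ j → j < n → G.Reachable (w j) (w (j + 1))) : G.Reachable (w m) (w n) := by
  induction n, hmn using Nat.le_induction with
  | base => rfl
  | succ n hmn ih => exact (ih fun j hj hjn => h j hj (by omega)).trans (h n hmn (by omega))

lemma reachable_or_of_le_sup_edge (h : G ≤ G' ⊔ edge a b) (huv : G.Reachable u v) :
    G'.Reachable u v ∨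
      (G'.Reachable u a ∨ G'.Reachable u b) ∧ (G'.Reachable v a ∨ G'.Reachable v b) := by
  obtain ⟨p⟩ := huv
  induction p with
  | nil => exact Or.inl .rfl
  | @cons x y z hxy _ ih =>
    rcases h hxy with hxy' | hxy'
    · rcases ih with hyz | ⟨hy, hz⟩
      · exact Or.inl (hxy'.reachable.trans hyz)
      · exact Or.inr ⟨hy.imp hxy'.reachable.trans hxy'.reachable.trans, hz⟩
    · obtain ⟨⟨rfl, rfl⟩ | ⟨rfl, rfl⟩, -⟩ := (edge_adj ..).1 hxy'
      · exact Or.inr ⟨Or.inl .rfl, ih.elim (fun hyz => Or.inr hyz.symm) And.right⟩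
      · exact Or.inr ⟨Or.inr .rfl, ih.elim (fun hyz => Or.inl hyz.symm) And.right⟩

lemma Reachable.of_le_sup_edge (h : G ≤ G' ⊔ edge a b) (hab : G'.Reachable a b)
    (huv : G.Reachable u v) : G'.Reachable u v := by
  have hb : ∀ {x}, G'.Reachable x a ∨ G'.Reachable x b → G'.Reachable x b :=
    fun hx => hx.elim (·.trans hab) id
  exact (reachable_or_of_le_sup_edge h huv).elim id fun ⟨hu, hv⟩ => (hb hu).trans (hb hv).symm

variable [Finite V]

lemma card_connectedComponent_le_of_le_sup_edge (hle : G' ≤ G) (h : G ≤ G' ⊔ edge a b)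
    (hab : G'.Reachable a b) : Nat.card G'.ConnectedComponent ≤ Nat.card G.ConnectedComponent := by
  refine Nat.card_le_card_of_injective (ConnectedComponent.map (Hom.ofLE hle)) ?_
  refine ConnectedComponent.ind₂ fun u v huv => ?_
  simp only [ConnectedComponent.map_mk, ConnectedComponent.eq] at huv ⊢
  exact Reachable.of_le_sup_edge h hab huv

lemma card_connectedComponent_le_succ_of_le_sup_edge (hle : G' ≤ G) (h : G ≤ G' ⊔ edge a b) :
    Nat.card G'.ConnectedComponent ≤ Nat.card G.ConnectedComponent + 1 := by
  classical
  let f : G'.ConnectedComponent → Option G.ConnectedComponent := fun c =>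
    if c = G'.connectedComponentMk b then none else some (c.map (Hom.ofLE hle))
  have hf : Function.Injective f := by
    refine ConnectedComponent.ind₂ fun u v huv => ?_
    by_cases hu : G'.connectedComponentMk u = G'.connectedComponentMk b <;>
      by_cases hv : G'.connectedComponentMk v = G'.connectedComponentMk b
    · rw [hu, hv]
    all_goals simp only [f, hu, hv, if_true, if_false, reduceCtorEq, Option.some_inj,
      ConnectedComponent.map_mk, Hom.coe_ofLE, id, ConnectedComponent.eq] at huv ⊢
    rw [ConnectedComponent.eq] at hu hv
    rcases reachable_or_of_le_sup_edge h huv with huv' | ⟨hu', hv'⟩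
    · exact huv'
    · exact (hu'.resolve_right hu).trans (hv'.resolve_right hv).symm
  simpa [Finite.card_option] using Nat.card_le_card_of_injective f hf

end SimpleGraph

open SimpleGraph

section Circuit

variable {A : V → V → Prop} {k : ℕ} {w : ℕ → V}

lemma IsCircuit.apply_succ_mod (hw : IsCircuit A k w) {i : ℕ} (hi : i < k) :
    w ((i + 1) % k) = w (i + 1) := by
  obtain hlt | heq : i + 1 < k ∨ i + 1 = k := by omega
  · rw [Nat.mod_eq_of_lt hlt]
  · rw [heq, Nat.mod_self, hw.2.1]

lemma IsCircuit.succ_injOn (hw : IsCircuit A k w) {i j : ℕ} (hi : i < k) (hj : j < k)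
    (hij : w (i + 1) = w (j + 1)) : i = j := by
  rw [← hw.apply_succ_mod hi, ← hw.apply_succ_mod hj] at hij
  have hmod := hw.2.2.2 _ (Nat.mod_lt _ (by omega)) _ (Nat.mod_lt _ (by omega)) hij
  rcases (show i + 1 ≤ k from hi).lt_or_eq with hi' | hi' <;>
    rcases (show j + 1 ≤ k from hj).lt_or_eq with hj' | hj' <;>
    simp only [Nat.mod_eq_of_lt, Nat.mod_self, hi', hj'] at hmod <;> omega

end Circuit

section Temporal

variable {E : Set ((V × V) × ℕ)} {e : (V × V) × ℕ} {u v : V}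

lemma underGraph_footArc_mono {F : Set ((V × V) × ℕ)} (h : E ⊆ F) :
    underGraph (footArc E) ≤ underGraph (footArc F) :=
  fun _ _ ⟨hne, huv⟩ => ⟨hne, huv.imp (fun ⟨t, ht⟩ => ⟨t, h ht⟩) fun ⟨t, ht⟩ => ⟨t, h ht⟩⟩

lemma underGraph_footArc_insert_le :
    underGraph (footArc (insert e E)) ≤ underGraph (footArc E) ⊔ edge e.1.1 e.1.2 := by
  rintro u v ⟨hne, ⟨t, huv⟩ | ⟨t, hvu⟩⟩
  · rcases huv with rfl | huv
    · exact Or.inr ((edge_adj ..).2 ⟨Or.inl ⟨rfl, rfl⟩, hne⟩)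
    · exact Or.inl ⟨hne, Or.inl ⟨t, huv⟩⟩
  · rcases hvu with rfl | hvu
    · exact Or.inr ((edge_adj ..).2 ⟨Or.inr ⟨rfl, rfl⟩, hne⟩)
    · exact Or.inl ⟨hne, Or.inr ⟨t, hvu⟩⟩

lemma footArc.reachable (h : footArc E u v) : (underGraph (footArc E)).Reachable u v := by
  by_cases huv : u = v
  · exact huv ▸ .rfl
  · exact Adj.reachable ⟨huv, Or.inl h⟩

lemma reachable_of_forall_footArc {w : ℕ → V} {n : ℕ}
    (h : ∀ j < n, footArc E (w j) (w (j + 1))) : (underGraph (footArc E)).Reachable (w 0) (w n) :=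
  reachable_of_forall_reachable_succ n.zero_le fun j _ hj => (h j hj).reachable

lemma DiJourney.reachable (h : DiJourney E u v) : (underGraph (footArc E)).Reachable u v := by
  obtain ⟨k, w, t, -, rfl, rfl, harc, -⟩ := h
  exact reachable_of_forall_footArc fun j hj => ⟨t j, harc j hj⟩

lemma DiJourney.of_insert_of_forall_le (hmax : ∀ x ∈ E, x.2 ≤ e.2)
    (h : DiJourney (insert e E) u v) :
    DiJourney E u v ∨ v = e.1.2 ∧ (underGraph (footArc E)).Reachable u e.1.1 := by
  obtain ⟨k, w, t, hk, rfl, rfl, harc, hmono⟩ := h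
  by_cases he : ∃ i < k, ((w i, w (i + 1)), t i) = e
  · classical
    obtain ⟨hik, hie⟩ := Nat.find_spec he
    have hfirst : ∀ j < Nat.find he, ((w j, w (j + 1)), t j) ≠ e := fun j hj hje =>
      Nat.find_min he hj ⟨by omega, hje⟩
    set i := Nat.find he
    have hlast : i + 1 = k := by
      by_contra hne
      have hlt := hmono i (by omega)
      have hle : t (i + 1) ≤ e.2 := by
        rcases harc (i + 1) (by omega) with hnext | hnext
        · exact (congrArg Prod.snd hnext).le
        · exact hmax _ hnext
      have hti : t i = e.2 := congrArg Prod.snd hie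
      omega
    refine Or.inr ⟨by rw [← hlast]; exact congrArg (·.1.2) hie, ?_⟩
    rw [← congrArg (·.1.1) hie]
    exact reachable_of_forall_footArc fun j hj =>
      ⟨t j, (harc j (by omega)).resolve_left (hfirst j hj)⟩
  · push Not at he
    exact Or.inl ⟨k, w, t, hk, rfl, rfl, fun i hi => (harc i hi).resolve_left (he i hi), hmono⟩

lemma IsDFVS.reachArc_insert {S : Set V} (hmax : ∀ x ∈ E, x.2 ≤ e.2)
    (hS : IsDFVS (reachArc E) S) : IsDFVS (reachArc (insert e E)) (insert e.1.2 S) := by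
  intro k w hw
  by_contra hcon
  push Not at hcon
  have hw' : IsCircuit (reachArc E) k w := by
    refine ⟨hw.1, hw.2.1, fun i hi => ⟨(hw.2.2.1 i hi).1, ?_⟩, hw.2.2.2⟩
    refine ((hw.2.2.1 i hi).2.of_insert_of_forall_le hmax).resolve_right fun ⟨hb, _⟩ => ?_
    refine hcon ((i + 1) % k) (Nat.mod_lt _ (by omega)) ?_
    rw [hw.apply_succ_mod hi, hb]
    exact Set.mem_insert _ _
  obtain ⟨i, hi, hwi⟩ := hS k w hw'
  exact hcon i hi (Set.mem_insert_of_mem _ hwi)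

lemma IsCircuit.reachArc_of_insert (hmax : ∀ x ∈ E, x.2 ≤ e.2)
    (hab : ¬(underGraph (footArc E)).Reachable e.1.1 e.1.2) {k : ℕ} {w : ℕ → V}
    (hw : IsCircuit (reachArc (insert e E)) k w) : IsCircuit (reachArc E) k w := by
  refine ⟨hw.1, hw.2.1, fun i hi => ⟨(hw.2.2.1 i hi).1, ?_⟩, hw.2.2.2⟩
  by_contra hJ
  obtain ⟨hb, ha⟩ := ((hw.2.2.1 i hi).2.of_insert_of_forall_le hmax).resolve_left hJ
  have hother : ∀ j < k, j ≠ i → (underGraph (footArc E)).Reachable (w j) (w (j + 1)) :=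
    fun j hj hji => ((hw.2.2.1 j hj).2.of_insert_of_forall_le hmax).elim DiJourney.reachable
      fun ⟨hb', _⟩ => absurd (hw.succ_injOn hj hi (hb'.trans hb.symm)) hji
  have hback : (underGraph (footArc E)).Reachable (w (i + 1)) (w i) := by
    have h₁ := reachable_of_forall_reachable_succ hi fun j hij hjk => hother j hjk (by omega)
    have h₂ := reachable_of_forall_reachable_succ i.zero_le fun j _ hji => hother j (by omega)
      (by omega)
    rw [hw.2.1] at h₁
    exact h₁.trans h₂
  exact hab (ha.symm.trans (hb ▸ hback).symm)

end Temporal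

lemma numComponents_footArc_empty :
    numComponents (footArc (∅ : Set ((V × V) × ℕ))) = Nat.card V := by
  refine (Nat.card_eq_of_bijective _ ⟨fun u v huv => ?_, Quot.mk_surjective⟩).symm
  obtain ⟨p⟩ := ConnectedComponent.eq.1 huv
  cases p with
  | nil => rfl
  | cons h _ => exact absurd h (by simp [underGraph, footArc])

lemma exists_isDFVS_reachArc [Fintype V] (E : Finset ((V × V) × ℕ)) :
    ∃ S : Finset V,
      S.card + Fintype.card V ≤ E.card + numComponents (footArc (↑E : Set ((V × V) × ℕ))) ∧
      IsDFVS (reachArc (↑E : Set ((V × V) × ℕ))) ↑S := by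
  classical
  induction E using Finset.induction_on_max_value (fun x : (V × V) × ℕ => x.2) with
  | empty =>
    refine ⟨∅, by simp [numComponents_footArc_empty], ?_⟩
    rintro k w ⟨hk, -, harc, -⟩
    obtain ⟨-, _, _, _, hk', -, -, harc', -⟩ := harc 0 hk
    simpa using harc' 0 hk'
  | insert e E he hmax ih =>
    obtain ⟨S, hcard, hS⟩ := ih
    have hle := underGraph_footArc_mono (Finset.coe_subset.2 (Finset.subset_insert e E))
    have hsup := underGraph_footArc_insert_le (E := (E : Set ((V × V) × ℕ))) (e := e)
    rw [← Finset.coe_insert] at hsup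
    rw [Finset.card_insert_of_notMem he]
    unfold numComponents at hcard ⊢
    by_cases hab : (underGraph (footArc ↑E)).Reachable e.1.1 e.1.2
    · refine ⟨insert e.1.2 S, ?_, ?_⟩
      · have := card_connectedComponent_le_of_le_sup_edge hle hsup hab
        have := Finset.card_insert_le e.1.2 S
        omega
      · rw [Finset.coe_insert, Finset.coe_insert]
        exact hS.reachArc_insert hmax
    · refine ⟨S, ?_, fun k w hw => hS k w (IsCircuit.reachArc_of_insert hmax hab ?_)⟩
      · have := card_connectedComponent_le_succ_of_le_sup_edge hle hsup
        omega
      · rwa [← Finset.coe_insert]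

theorem stmt2_general {V : Type*} [Fintype V]
    (E : Finset ((V × V) × ℕ)) :
    Fintype.card V ≤ E.card + numComponents (footArc (↑E : Set ((V × V) × ℕ))) ∧
    ∃ S : Finset V,
      S.card ≤ E.card + numComponents (footArc (↑E : Set ((V × V) × ℕ))) -
        Fintype.card V ∧
      IsDFVS (reachArc (↑E : Set ((V × V) × ℕ))) (↑S : Set V) := by
  obtain ⟨S, hcard, hS⟩ := exists_isDFVS_reachArc E
  exact ⟨by omega, S, by omega, hS⟩

/-- for a temporal digraph on `n` vertices whose footprint has `cc`
connected components, `p = |ℰ| + cc - n ≥ 0` and there is a DFVS of the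
reachability graph of size at most `p`. -/
theorem stmt2 {V : Type*} [Fintype V] [DecidableEq V]
    (E : Finset ((V × V) × ℕ)) (hE : ValidDiTemporal E) :
    Fintype.card V ≤ E.card + numComponents (footArc (↑E : Set ((V × V) × ℕ))) ∧
    ∃ S : Finset V,
      S.card ≤ E.card + numComponents (footArc (↑E : Set ((V × V) × ℕ))) -
        Fintype.card V ∧
      IsDFVS (reachArc (↑E : Set ((V × V) × ℕ))) (↑S : Set V) :=
  stmt2_general E
end

section
/- Let R = (V, A) be a connected digraph. Then R is walk-Helly if and only if there exists a tree representation of R. -/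
/-! Common definitions: temporal (di)graphs, journeys, footprints,
closed walks, the walk-Helly property, tree representations, etc. -/

variable {V : Type*}

/-!
Closed walks through a common vertex can be spliced into one closed walk, so the vertex sets of
closed walks, together with all singletons and the whole vertex set, form a family that is closed
under unions of intersecting members, and that is Helly when the digraph is walk-Helly. Such a
family is represented by a tree: fix a vertex `x`, a maximal member `B` avoiding `x`, and (by the
Helly property) a vertex `g` of `B` lying in every member that contains `x` and meets `B`. By
maximality a member meeting `B` either lies in `B` or contains `x`, hence `g`, so trees for the
traces of the family on `B` and on its complement, joined by the edge `gx`, represent the family.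

Conversely, vertex sets inducing connected subgraphs of a tree are path-convex. Three pairwise
intersecting path-convex sets share a vertex: walking along the path between the witnesses of
`S₂ ∩ S₃` and `S₁ ∩ S₃`, which stays in `S₃` and in `S₁ ∪ S₂`, one cannot jump from `S₂ \ S₁` to
`S₁ \ S₂` without closing a cycle through `S₁ ∩ S₂`. As path-convex sets are closed under
intersection, the general Helly property follows by induction.
-/

section ClosedWalks

variable {A : V → V → Prop} {k : ℕ} {w : ℕ → V}

theorem IsClosedWalk.adj_mod (h : IsClosedWalk A k w) (j : ℕ) :
    A (w (j % k)) (w ((j + 1) % k)) := by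
  obtain ⟨hk, hclosed, hadj⟩ := h
  have hj : j % k < k := Nat.mod_lt _ hk
  rw [← Nat.mod_add_mod]
  rcases (Nat.succ_le_of_lt hj).lt_or_eq with hlt | heq
  · rw [Nat.mod_eq_of_lt hlt]
    exact hadj _ hj
  · have heq : j % k + 1 = k := heq
    have := hadj _ hj
    rw [heq, hclosed] at this
    rwa [heq, Nat.mod_self]

theorem IsClosedWalk.rotate (h : IsClosedWalk A k w) (i : ℕ) :
    IsClosedWalk A k (fun t => w ((i + t) % k)) :=
  ⟨h.1, by simp, fun t _ => by simpa [Nat.add_assoc] using h.adj_mod (i + t)⟩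

theorem walkSet_rotate (hk : 0 < k) (i : ℕ) :
    walkSet k (fun t => w ((i + t) % k)) = walkSet k w := by
  ext x
  constructor
  · rintro ⟨t, -, rfl⟩
    exact ⟨_, Nat.mod_lt _ hk, rfl⟩
  · rintro ⟨t, ht, rfl⟩
    refine ⟨(t + (k - i % k)) % k, Nat.mod_lt _ hk, ?_⟩
    have hsum : i + (t + (k - i % k)) = t + k * (i / k + 1) := by
      have := Nat.div_add_mod i k
      have := Nat.mod_lt i hk
      rw [Nat.mul_add, Nat.mul_one]
      generalize k * (i / k) = m at *
      generalize i % k = r at *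
      omega
    simp only [Nat.add_mod_mod, hsum, Nat.add_mul_mod_self_left, Nat.mod_eq_of_lt ht]

theorem IsClosedWalk.append {k' : ℕ} {w' : ℕ → V} (h : IsClosedWalk A k w)
    (h' : IsClosedWalk A k' w') (hstart : w 0 = w' 0) :
    IsClosedWalk A (k + k') (fun t => if t < k then w t else w' (t - k)) := by
  obtain ⟨hk, hclosed, hadj⟩ := h
  obtain ⟨hk', hclosed', hadj'⟩ := h'
  refine ⟨by omega, ?_, fun t ht => ?_⟩
  · simp [hclosed', hstart]
  · by_cases htk : t + 1 < k
    · simpa [htk, Nat.lt_of_succ_lt htk] using hadj t (by omega)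
    · by_cases htk' : t < k
      · have : t + 1 = k := by omega
        simpa [htk', this, hclosed, hstart] using hadj t htk'
      · simpa [htk, htk', Nat.sub_add_comm (Nat.le_of_not_lt htk')] using hadj' (t - k) (by omega)

theorem walkSet_append (k' : ℕ) (w' : ℕ → V) :
    walkSet (k + k') (fun t => if t < k then w t else w' (t - k)) =
      walkSet k w ∪ walkSet k' w' := by
  ext x
  constructor
  · rintro ⟨t, ht, rfl⟩
    by_cases htk : t < k
    · exact Or.inl ⟨t, htk, (if_pos htk).symm⟩
    · exact Or.inr ⟨t - k, by omega, (if_neg htk).symm⟩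
  · rintro (⟨t, ht, rfl⟩ | ⟨t, ht, rfl⟩)
    · exact ⟨t, by omega, if_pos ht⟩
    · exact ⟨k + t, by omega, by simp⟩

end ClosedWalks

theorem IsWalkSet.nonempty {A : V → V → Prop} {S : Set V} (h : IsWalkSet A S) : S.Nonempty := by
  obtain ⟨k, w, hw, rfl⟩ := h
  exact ⟨w 0, 0, hw.1, rfl⟩

theorem IsWalkSet.union {A : V → V → Prop} {S S' : Set V} (hS : IsWalkSet A S)
    (hS' : IsWalkSet A S') (hSS' : (S ∩ S').Nonempty) : IsWalkSet A (S ∪ S') := by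
  obtain ⟨k, w, hw, rfl⟩ := hS
  obtain ⟨k', w', hw', rfl⟩ := hS'
  obtain ⟨-, ⟨i, hi, rfl⟩, ⟨i', hi', hii'⟩⟩ := hSS'
  refine ⟨_, _, (hw.rotate i).append (hw'.rotate i') ?_, ?_⟩
  · simp [Nat.mod_eq_of_lt hi, Nat.mod_eq_of_lt hi', hii']
  · rw [eq_comm, walkSet_append (w := fun t => w ((i + t) % k)) k' fun t => w' ((i' + t) % k'),
      walkSet_rotate hw.1, walkSet_rotate hw'.1]

section SetFamilies

variable {α : Type*} {𝒟 : Set (Set α)}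

def IsOverlapUnionClosed (𝒟 : Set (Set α)) : Prop :=
  ∀ W ∈ 𝒟, ∀ W' ∈ 𝒟, (W ∩ W').Nonempty → W ∪ W' ∈ 𝒟

def IsHelly (𝒟 : Set (Set α)) : Prop :=
  ∀ 𝒮 ⊆ 𝒟, 𝒮.Nonempty → (∀ S ∈ 𝒮, ∀ S' ∈ 𝒮, (S ∩ S').Nonempty) → (⋂₀ 𝒮).Nonempty

def familyTrace (𝒟 : Set (Set α)) (B : Set α) : Set (Set α) :=
  {S | S.Nonempty ∧ ∃ W ∈ 𝒟, W ∩ B = S}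

theorem IsHelly.mono {𝒟' : Set (Set α)} (h : IsHelly 𝒟) (h' : 𝒟' ⊆ 𝒟) : IsHelly 𝒟' :=
  fun 𝒮 h𝒮 => h 𝒮 (h𝒮.trans h')

theorem IsOverlapUnionClosed.insert_univ (h : IsOverlapUnionClosed 𝒟) :
    IsOverlapUnionClosed (insert Set.univ 𝒟) := by
  rintro W (rfl | hW) W' (rfl | hW') hWW'
  · exact Or.inl (Set.union_self _)
  · exact Or.inl (Set.univ_union _)
  · exact Or.inl (Set.union_univ _)
  · exact Or.inr (h W hW W' hW' hWW')

theorem IsHelly.insert_univ (h : IsHelly 𝒟) : IsHelly (insert Set.univ 𝒟) := by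
  intro 𝒮 h𝒮 hne hpair
  by_cases h𝒮𝒟 : (𝒮 ∩ 𝒟).Nonempty
  · obtain ⟨p, hp⟩ := h _ Set.inter_subset_right h𝒮𝒟
      fun S hS S' hS' => hpair S hS.1 S' hS'.1
    refine ⟨p, fun S hS => ?_⟩
    rcases h𝒮 hS with rfl | hS𝒟
    · trivial
    · exact hp S ⟨hS, hS𝒟⟩
  · obtain ⟨S, hS⟩ := hne
    obtain ⟨p, -⟩ := hpair S hS S hS
    refine ⟨p, fun S' hS' => ?_⟩
    rcases h𝒮 hS' with rfl | hS'𝒟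
    · trivial
    · exact absurd ⟨S', hS', hS'𝒟⟩ h𝒮𝒟

theorem IsOverlapUnionClosed.union_range_singleton (h : IsOverlapUnionClosed 𝒟) :
    IsOverlapUnionClosed (𝒟 ∪ Set.range ({·})) := by
  rintro W (hW | ⟨x, rfl⟩) W' (hW' | ⟨y, rfl⟩) hWW'
  · exact Or.inl (h W hW W' hW' hWW')
  · rw [Set.union_singleton, Set.insert_eq_of_mem (by simpa using hWW')]
    exact Or.inl hW
  · rw [Set.singleton_union, Set.insert_eq_of_mem (by simpa using hWW')]
    exact Or.inl hW'
  · obtain rfl : y = x := by simpa using hWW'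
    exact Or.inr ⟨y, (Set.union_self _).symm⟩

theorem IsHelly.union_range_singleton (h : IsHelly 𝒟) :
    IsHelly (𝒟 ∪ Set.range ({·})) := by
  intro 𝒮 h𝒮 hne hpair
  by_cases hsing : ∃ x, {x} ∈ 𝒮
  · obtain ⟨x, hx⟩ := hsing
    exact ⟨x, fun S hS => by simpa using hpair _ hx S hS⟩
  · simp only [not_exists] at hsing
    refine h 𝒮 (fun S hS => ?_) hne hpair
    rcases h𝒮 hS with hS𝒟 | ⟨x, rfl⟩
    exacts [hS𝒟, absurd hS (hsing x)]

theorem IsOverlapUnionClosed.familyTrace (h : IsOverlapUnionClosed 𝒟) (B : Set α) :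
    IsOverlapUnionClosed (familyTrace 𝒟 B) := by
  rintro _ ⟨hS, W, hW, rfl⟩ _ ⟨-, W', hW', rfl⟩ ⟨x, hx, hx'⟩
  exact ⟨hS.mono Set.subset_union_left, W ∪ W', h W hW W' hW' ⟨x, hx.1, hx'.1⟩,
    Set.union_inter_distrib_right _ _ _⟩

theorem IsHelly.familyTrace_of_mem {B : Set α} (h : IsHelly 𝒟) (hB : B ∈ 𝒟) :
    IsHelly (familyTrace 𝒟 B) := by
  intro 𝒮 h𝒮 hne hpair
  have hmeet : ∀ W ∈ {W ∈ 𝒟 | W ∩ B ∈ 𝒮}, (W ∩ B).Nonempty := fun W hW => (h𝒮 hW.2).1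
  have hBne : B.Nonempty := by
    obtain ⟨S, hS⟩ := hne
    obtain ⟨-, W, hW, rfl⟩ := h𝒮 hS
    exact (hmeet W ⟨hW, hS⟩).mono Set.inter_subset_right
  have hlift : ∀ W ∈ insert B {W ∈ 𝒟 | W ∩ B ∈ 𝒮}, ∀ W' ∈ insert B {W ∈ 𝒟 | W ∩ B ∈ 𝒮},
      (W ∩ W').Nonempty := by
    rintro _ (rfl | hW₁) _ (rfl | hW₂)
    · simpa using hBne
    · simpa [Set.inter_comm] using hmeet _ hW₂
    · exact hmeet _ hW₁
    · obtain ⟨q, hq₁, hq₂⟩ := hpair _ hW₁.2 _ hW₂.2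
      exact ⟨q, hq₁.1, hq₂.1⟩
  obtain ⟨p, hp⟩ := h _ (Set.insert_subset hB fun W hW => hW.1) (Set.insert_nonempty _ _) hlift
  refine ⟨p, fun S hS => ?_⟩
  obtain ⟨-, W, hW, rfl⟩ := h𝒮 hS
  exact ⟨hp W (Or.inr ⟨hW, hS⟩), hp B (Or.inl rfl)⟩

theorem IsHelly.familyTrace_compl {B : Set α} {x : α} (h : IsHelly 𝒟) (hxB : x ∉ B)
    (hB : ∀ W ∈ 𝒟, (W ∩ B).Nonempty → W ⊆ B ∨ x ∈ W) :
    IsHelly (familyTrace 𝒟 Bᶜ) := by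
  intro 𝒮 h𝒮 hne hpair
  have hlift_ne : {W ∈ 𝒟 | W ∩ Bᶜ ∈ 𝒮}.Nonempty := by
    obtain ⟨S, hS⟩ := hne
    obtain ⟨-, W, hW, rfl⟩ := h𝒮 hS
    exact ⟨W, hW, hS⟩
  have hlift : ∀ W ∈ {W ∈ 𝒟 | W ∩ Bᶜ ∈ 𝒮}, ∀ W' ∈ {W ∈ 𝒟 | W ∩ Bᶜ ∈ 𝒮},
      (W ∩ W').Nonempty := by
    rintro W₁ hW₁ W₂ hW₂
    obtain ⟨q, hq₁, hq₂⟩ := hpair _ hW₁.2 _ hW₂.2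
    exact ⟨q, hq₁.1, hq₂.1⟩
  obtain ⟨p, hp⟩ := h _ (fun W hW => hW.1) hlift_ne hlift
  by_cases hpB : p ∈ B
  · -- every lifted member then meets `B` without lying in `B`, so it contains `x`
    refine ⟨x, fun S hS => ?_⟩
    obtain ⟨hSne, W, hW, rfl⟩ := h𝒮 hS
    obtain ⟨y, hyW, hyB⟩ := hSne
    rcases hB W hW ⟨p, hp W ⟨hW, hS⟩, hpB⟩ with hWB | hxW
    · exact absurd (hWB hyW) hyB
    · exact ⟨hxW, hxB⟩
  · refine ⟨p, fun S hS => ?_⟩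
    obtain ⟨-, W, hW, rfl⟩ := h𝒮 hS
    exact ⟨hp W ⟨hW, hS⟩, hpB⟩

theorem isHelly_setOf_of_inter_inter_nonempty [Finite α] {P : Set α → Prop}
    (hinter : ∀ S S', P S → P S' → P (S ∩ S'))
    (htriple : ∀ S₁ S₂ S₃, P S₁ → P S₂ → P S₃ → (S₁ ∩ S₂).Nonempty → (S₁ ∩ S₃).Nonempty →
      (S₂ ∩ S₃).Nonempty → (S₁ ∩ S₂ ∩ S₃).Nonempty) :
    IsHelly {S | P S} := by
  have key : ∀ 𝒮 : Set (Set α), 𝒮.Finite → (∀ S ∈ 𝒮, P S) → ∀ S₀, P S₀ →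
      (∀ S ∈ insert S₀ 𝒮, ∀ S' ∈ insert S₀ 𝒮, (S ∩ S').Nonempty) → (S₀ ∩ ⋂₀ 𝒮).Nonempty := by
    intro 𝒮 hfin
    induction 𝒮, hfin using Set.Finite.induction_on with
    | empty => exact fun _ S₀ _ hpair => by simpa using hpair S₀ (.inl rfl) S₀ (.inl rfl)
    | @insert S₁ 𝒮 _ _ ih =>
      intro hP S₀ hS₀ hpair
      have hmem : ∀ S ∈ 𝒮, S ∈ insert S₀ (insert S₁ 𝒮) := fun S hS => .inr (.inr hS)
      have h₀ := hpair S₀ (.inl rfl)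
      have h₁ := hpair S₁ (.inr (.inl rfl))
      have htriple' : ∀ S ∈ 𝒮, (S₀ ∩ S₁ ∩ S).Nonempty := fun S hS =>
        htriple _ _ _ hS₀ (hP S₁ (.inl rfl)) (hP S (.inr hS)) (h₀ _ (.inr (.inl rfl)))
          (h₀ S (hmem S hS)) (h₁ S (hmem S hS))
      rw [Set.sInter_insert, ← Set.inter_assoc]
      refine ih (fun S hS => hP S (.inr hS)) _ (hinter _ _ hS₀ (hP S₁ (.inl rfl))) ?_
      rintro _ (rfl | hS) _ (rfl | hS')
      · simpa using h₀ _ (.inr (.inl rfl))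
      · exact htriple' _ hS'
      · simpa [Set.inter_comm] using htriple' _ hS
      · exact hpair _ (hmem _ hS) _ (hmem _ hS')
  intro 𝒮 h𝒮 ⟨S₀, hS₀⟩ hpair
  refine (key 𝒮 (Set.toFinite _) h𝒮 S₀ (h𝒮 hS₀) ?_).mono Set.inter_subset_right
  rwa [Set.insert_eq_of_mem hS₀]

end SetFamilies

namespace SimpleGraph

variable {G H K : SimpleGraph V}

theorem Connected.induce_of_le {s : Set V} (h : (G.induce s).Connected) (hle : G ≤ H) :
    (H.induce s).Connected :=
  h.mono fun _ _ hab => hle hab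

theorem Walk.edges_subset_left_of_le_sup {s : Set V} (hK : K ≤ G ⊔ H) (hG : G.support ⊆ s)
    (hH : H.support ⊆ sᶜ) {a b : V} (p : K.Walk a b) (ha : a ∈ s) :
    b ∈ s ∧ ∀ e ∈ p.edges, e ∈ G.edgeSet := by
  induction p with
  | nil => exact ⟨ha, by simp⟩
  | cons hac q ih =>
    have hGac := (hK hac).resolve_right fun hHac => hH hHac.mem_support_left ha
    obtain ⟨hb, hq⟩ := ih (hG hGac.mem_support_right)
    exact ⟨hb, by simpa [hGac] using hq⟩

theorem IsAcyclic.sup_of_support_subset {s : Set V} (hGa : G.IsAcyclic) (hHa : H.IsAcyclic)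
    (hG : G.support ⊆ s) (hH : H.support ⊆ sᶜ) : (G ⊔ H).IsAcyclic := by
  intro a c hc
  by_cases ha : a ∈ s
  · exact hGa _ (hc.transfer (c.edges_subset_left_of_le_sup le_rfl hG hH ha).2)
  · refine hHa _ (hc.transfer (c.edges_subset_left_of_le_sup (sup_comm G H).le hH ?_ ha).2)
    rwa [compl_compl]

theorem not_reachable_sup_of_support_subset {s : Set V} (hG : G.support ⊆ s)
    (hH : H.support ⊆ sᶜ) {a b : V} (ha : a ∈ s) (hb : b ∉ s) : ¬(G ⊔ H).Reachable a b :=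
  fun ⟨p⟩ => hb (p.edges_subset_left_of_le_sup le_rfl hG hH ha).1

theorem Walk.exists_mem_support_inter {S₁ S₂ : Set V}
    (hcross : ∀ ⦃a c⦄, G.Adj a c → a ∈ S₂ → c ∈ S₁ → a ∈ S₁ ∨ c ∈ S₂) {a b : V}
    (p : G.Walk a b) (ha : a ∈ S₂) (hb : b ∈ S₁) (hp : ∀ v ∈ p.support, v ∈ S₁ ∨ v ∈ S₂) :
    ∃ v ∈ p.support, v ∈ S₁ ∧ v ∈ S₂ := by
  induction p with
  | nil => exact ⟨_, by simp, hb, ha⟩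
  | @cons u c w hac q ih =>
    by_cases ha₁ : u ∈ S₁
    · exact ⟨u, by simp, ha₁, ha⟩
    have hc₂ := (hp c (by simp)).elim (fun hc₁ => (hcross hac ha hc₁).resolve_left ha₁) id
    obtain ⟨v, hv, hv'⟩ := ih hc₂ hb fun v hv => hp v (by simp [hv])
    exact ⟨v, by simp [hv], hv'⟩

def IsPathConvex (G : SimpleGraph V) (S : Set V) : Prop :=
  ∀ ⦃a b : V⦄ (p : G.Walk a b), p.IsPath → a ∈ S → b ∈ S → ∀ v ∈ p.support, v ∈ S

theorem IsAcyclic.isPathConvex_of_connected_induce {S : Set V} (hG : G.IsAcyclic)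
    (hS : (G.induce S).Connected) : G.IsPathConvex S := by
  classical
  intro a b p hp ha hb v hv
  obtain ⟨q⟩ := hS.preconnected ⟨a, ha⟩ ⟨b, hb⟩
  let q' : G.Walk a b := q.map (Embedding.induce S).toHom
  have hq' : ∀ v ∈ q'.support, v ∈ S := by
    intro v hv
    obtain ⟨y, -, rfl⟩ := List.mem_map.mp ((Walk.support_map _ _) ▸ hv)
    exact y.2
  have hpq : p = q'.bypass :=
    congrArg Subtype.val ((hG.subsingleton_path a b).elim ⟨p, hp⟩ ⟨q'.bypass, q'.bypass_isPath⟩)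
  exact hq' v (q'.support_bypass_subset_support (hpq ▸ hv))

theorem IsTree.mem_or_mem_of_adj {S₁ S₂ : Set V} (hG : G.IsTree) (h₁ : G.IsPathConvex S₁)
    (h₂ : G.IsPathConvex S₂) {x a c : V} (hx₁ : x ∈ S₁) (hx₂ : x ∈ S₂) (hac : G.Adj a c)
    (ha : a ∈ S₂) (hc : c ∈ S₁) : a ∈ S₁ ∨ c ∈ S₂ := by
  obtain ⟨p, hp⟩ := hG.connected.preconnected.exists_isPath c x
  by_cases hap : a ∈ p.support
  · exact Or.inl (h₁ p hp hc hx₁ a hap)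
  · exact Or.inr (h₂ (Walk.cons hac p) (hp.cons hap) ha hx₂ c (by simp))

theorem IsTree.inter_inter_nonempty {S₁ S₂ S₃ : Set V} (hG : G.IsTree) (h₁ : G.IsPathConvex S₁)
    (h₂ : G.IsPathConvex S₂) (h₃ : G.IsPathConvex S₃) (h₁₂ : (S₁ ∩ S₂).Nonempty)
    (h₁₃ : (S₁ ∩ S₃).Nonempty) (h₂₃ : (S₂ ∩ S₃).Nonempty) : (S₁ ∩ S₂ ∩ S₃).Nonempty := by
  classical
  obtain ⟨x₃, hx₃₁, hx₃₂⟩ := h₁₂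
  obtain ⟨x₂, hx₂₁, hx₂₃⟩ := h₁₃
  obtain ⟨x₁, hx₁₂, hx₁₃⟩ := h₂₃
  obtain ⟨q₁, hq₁⟩ := hG.connected.preconnected.exists_isPath x₁ x₃
  obtain ⟨q₂, hq₂⟩ := hG.connected.preconnected.exists_isPath x₃ x₂
  have hcover : ∀ v ∈ (q₁.append q₂).bypass.support, v ∈ S₁ ∨ v ∈ S₂ := by
    intro v hv
    rcases (Walk.mem_support_append_iff q₁ q₂).mp
      ((q₁.append q₂).support_bypass_subset_support hv) with hv | hv
    · exact Or.inr (h₂ q₁ hq₁ hx₁₂ hx₃₂ v hv)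
    · exact Or.inl (h₁ q₂ hq₂ hx₃₁ hx₂₁ v hv)
  obtain ⟨v, hv, hv₁, hv₂⟩ := (q₁.append q₂).bypass.exists_mem_support_inter
    (fun _ _ hac ha hc => hG.mem_or_mem_of_adj h₁ h₂ hx₃₁ hx₃₂ hac ha hc) hx₁₂ hx₂₁ hcover
  exact ⟨v, ⟨hv₁, hv₂⟩, h₃ _ (Walk.bypass_isPath _) hx₁₃ hx₂₃ v hv⟩

theorem IsTree.isHelly_isPathConvex [Finite V] (hG : G.IsTree) : IsHelly {S | G.IsPathConvex S} :=
  isHelly_setOf_of_inter_inter_nonempty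
    (fun _ _ hS hS' _ _ p hp ha hb v hv => ⟨hS p hp ha.1 hb.1 v hv, hS' p hp ha.2 hb.2 v hv⟩)
    fun _ _ _ h₁ h₂ h₃ => hG.inter_inter_nonempty h₁ h₂ h₃

end SimpleGraph

section HellySystems

open SimpleGraph

variable {α : Type*} {U B : Set α} {𝒟 : Set (Set α)}

structure IsHellySystem (U : Set α) (𝒟 : Set (Set α)) : Prop where
  nonempty_subset : ∀ W ∈ 𝒟, W.Nonempty ∧ W ⊆ U
  mem : U ∈ 𝒟
  singleton_mem : ∀ x ∈ U, {x} ∈ 𝒟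
  unionClosed : IsOverlapUnionClosed 𝒟
  helly : IsHelly 𝒟

structure IsForestRepOn (T : SimpleGraph α) (U : Set α) (𝒟 : Set (Set α)) : Prop where
  isAcyclic : T.IsAcyclic
  support_subset : T.support ⊆ U
  connected_induce : ∀ W ∈ 𝒟, (T.induce W).Connected

theorem IsOverlapUnionClosed.subset_or_mem_of_maximal (h : IsOverlapUnionClosed 𝒟) {x : α}
    (hB : Maximal (fun W => W ∈ 𝒟 ∧ x ∉ W) B) {W : Set α} (hW : W ∈ 𝒟) (hWB : (W ∩ B).Nonempty) :
    W ⊆ B ∨ x ∈ W := by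
  refine or_iff_not_imp_right.mpr fun hxW => ?_
  have hWB' : W ∪ B ⊆ B :=
    hB.2 ⟨h W hW B hB.1.1 hWB, fun hx => hx.elim hxW hB.1.2⟩ Set.subset_union_right
  exact Set.subset_union_left.trans hWB'

theorem IsHelly.exists_mem_forall_of_mem (h : IsHelly 𝒟) (hB : B ∈ 𝒟) (hBne : B.Nonempty)
    (x : α) : ∃ g ∈ B, ∀ W ∈ 𝒟, x ∈ W → (W ∩ B).Nonempty → g ∈ W := by
  have hpair : ∀ W ∈ insert B {W ∈ 𝒟 | x ∈ W ∧ (W ∩ B).Nonempty},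
      ∀ W' ∈ insert B {W ∈ 𝒟 | x ∈ W ∧ (W ∩ B).Nonempty}, (W ∩ W').Nonempty := by
    rintro _ (rfl | hW) _ (rfl | hW')
    · simpa using hBne
    · simpa [Set.inter_comm] using hW'.2.2
    · exact hW.2.2
    · exact ⟨x, hW.2.1, hW'.2.1⟩
  obtain ⟨g, hg⟩ := h _ (Set.insert_subset hB fun W hW => hW.1) (Set.insert_nonempty _ _) hpair
  exact ⟨g, hg B (.inl rfl), fun W hW hxW hWB => hg W (.inr ⟨hW, hxW, hWB⟩)⟩

theorem IsHellySystem.familyTrace_of_mem (h : IsHellySystem U 𝒟) (hB : B ∈ 𝒟) :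
    IsHellySystem B (familyTrace 𝒟 B) where
  nonempty_subset := fun _ ⟨hS, _, _, hWS⟩ => ⟨hS, hWS ▸ Set.inter_subset_right⟩
  mem := ⟨(h.nonempty_subset B hB).1, B, hB, Set.inter_self B⟩
  singleton_mem x hx := ⟨Set.singleton_nonempty x, {x},
    h.singleton_mem x ((h.nonempty_subset B hB).2 hx), Set.singleton_inter_of_mem hx⟩
  unionClosed := h.unionClosed.familyTrace B
  helly := h.helly.familyTrace_of_mem hB

theorem IsHellySystem.familyTrace_compl (h : IsHellySystem U 𝒟) {x : α} (hxU : x ∈ U)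
    (hxB : x ∉ B) (hB : ∀ W ∈ 𝒟, (W ∩ B).Nonempty → W ⊆ B ∨ x ∈ W) :
    IsHellySystem (U \ B) (familyTrace 𝒟 Bᶜ) where
  nonempty_subset := fun _ ⟨hS, W, hW, hWS⟩ =>
    ⟨hS, hWS ▸ Set.inter_subset_inter_left _ (h.nonempty_subset W hW).2⟩
  mem := ⟨⟨x, hxU, hxB⟩, U, h.mem, Set.sdiff_eq U B ▸ rfl⟩
  singleton_mem y hy := ⟨Set.singleton_nonempty y, {y}, h.singleton_mem y hy.1,
    Set.singleton_inter_of_mem hy.2⟩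
  unionClosed := h.unionClosed.familyTrace Bᶜ
  helly := h.helly.familyTrace_compl hxB hB

theorem IsHellySystem.isForestRepOn_sup_edge (h : IsHellySystem U 𝒟) {x g : α} (hxU : x ∈ U)
    (hBU : B ⊆ U) (hxB : x ∉ B) (hgB : g ∈ B) (hB : ∀ W ∈ 𝒟, (W ∩ B).Nonempty → W ⊆ B ∨ x ∈ W)
    (hg : ∀ W ∈ 𝒟, x ∈ W → (W ∩ B).Nonempty → g ∈ W) {TB TC : SimpleGraph α}
    (hTB : IsForestRepOn TB B (familyTrace 𝒟 B))
    (hTC : IsForestRepOn TC (U \ B) (familyTrace 𝒟 Bᶜ)) :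
    IsForestRepOn (TB ⊔ TC ⊔ edge g x) U 𝒟 := by
  have hTCB : TC.support ⊆ Bᶜ := hTC.support_subset.trans (Set.sdiff_subset_compl U B)
  have hTBle : TB ≤ TB ⊔ TC ⊔ edge g x := le_sup_left.trans le_sup_left
  have hTCle : TC ≤ TB ⊔ TC ⊔ edge g x := le_sup_right.trans le_sup_left
  have hacyclic : (TB ⊔ TC).IsAcyclic :=
    hTB.isAcyclic.sup_of_support_subset hTC.isAcyclic hTB.support_subset hTCB
  refine ⟨hacyclic.sup_edge_of_not_reachable
    (not_reachable_sup_of_support_subset hTB.support_subset hTCB hgB hxB), ?_, fun W hW => ?_⟩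
  · rintro v ⟨w, (hvw | hvw) | hvw⟩
    · exact hBU (hTB.support_subset hvw.mem_support_left)
    · exact (hTC.support_subset hvw.mem_support_left).1
    · obtain ⟨⟨rfl, -⟩ | ⟨rfl, -⟩, -⟩ := (edge_adj g x v w).mp hvw
      exacts [hBU hgB, hxU]
  by_cases hWB : (W ∩ B).Nonempty
  · rcases hB W hW hWB with hWsub | hxW
    · refine (hTB.connected_induce W ⟨(h.nonempty_subset W hW).1, W, hW, ?_⟩).induce_of_le hTBle
      exact Set.inter_eq_left.mpr hWsub
    · have hBpart := (hTB.connected_induce (W ∩ B) ⟨hWB, W, hW, rfl⟩).induce_of_le hTBle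
      have hCpart :=
        (hTC.connected_induce (W ∩ Bᶜ) ⟨⟨x, hxW, hxB⟩, W, hW, rfl⟩).induce_of_le hTCle
      have hadj : (TB ⊔ TC ⊔ edge g x).Adj g x :=
        (sup_adj _ _ _ _).mpr (.inr ((edge_adj g x g x).mpr
          ⟨.inl ⟨rfl, rfl⟩, fun hgx => hxB (hgx ▸ hgB)⟩))
      rw [← Set.inter_union_compl W B]
      exact connected_induce_union hBpart.preconnected hCpart.preconnected
        ⟨hg W hW hxW hWB, hgB⟩ ⟨hxW, hxB⟩ hadj
  · refine (hTC.connected_induce W ⟨(h.nonempty_subset W hW).1, W, hW, ?_⟩).induce_of_le hTCle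
    exact Set.inter_eq_left.mpr fun y hy hyB => hWB ⟨y, hy, hyB⟩

theorem IsHellySystem.exists_isForestRepOn [Finite α] (h : IsHellySystem U 𝒟) :
    ∃ T : SimpleGraph α, IsForestRepOn T U 𝒟 := by
  induction hn : U.ncard using Nat.strong_induction_on generalizing U 𝒟 with
  | _ n ih =>
  obtain ⟨x, hxU⟩ := (h.nonempty_subset U h.mem).1
  by_cases hall : ∀ W ∈ 𝒟, x ∈ W
  · refine ⟨⊥, isAcyclic_bot, by simp, fun W hW => ?_⟩
    obtain ⟨hWne, hWU⟩ := h.nonempty_subset W hW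
    obtain rfl : W = {x} := (Set.Nonempty.subset_singleton_iff hWne).mp fun y hy =>
      (hall _ (h.singleton_mem y (hWU hy))).symm
    rw [induce_singleton_eq_top]
    exact connected_top
  · simp only [not_forall] at hall
    obtain ⟨W₀, hW₀, hxW₀⟩ := hall
    obtain ⟨B, hW₀B, hB⟩ := Finite.exists_le_maximal (p := fun W => W ∈ 𝒟 ∧ x ∉ W) ⟨hW₀, hxW₀⟩
    obtain ⟨hBne, hBU⟩ := h.nonempty_subset B hB.1.1
    have hsplit := fun W => h.unionClosed.subset_or_mem_of_maximal hB (W := W)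
    obtain ⟨g, hgB, hg⟩ := h.helly.exists_mem_forall_of_mem hB.1.1 hBne x
    obtain ⟨TB, hTB⟩ := ih B.ncard (hn ▸ Set.ncard_lt_ncard ⟨hBU, fun hUB => hB.1.2 (hUB hxU)⟩)
      (h.familyTrace_of_mem hB.1.1) rfl
    have hUB : U \ B ⊂ U := Set.sdiff_ssubset_left_iff.mpr (by rwa [Set.inter_eq_right.mpr hBU])
    obtain ⟨TC, hTC⟩ := ih (U \ B).ncard (hn ▸ Set.ncard_lt_ncard hUB)
      (h.familyTrace_compl hxU hB.1.2 hsplit) rfl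
    exact ⟨_, h.isForestRepOn_sup_edge hxU hBU hB.1.2 hgB hsplit hg hTB hTC⟩

end HellySystems

theorem walkHelly_iff_isHelly {A : V → V → Prop} :
    WalkHelly A ↔ IsHelly {S | IsWalkSet A S} :=
  ⟨fun h 𝒮 h𝒮 hne hpair => h 𝒮 hne h𝒮 hpair, fun h 𝒮 hne h𝒮 hpair => h 𝒮 h𝒮 hne hpair⟩

theorem IsHelly.isHellySystem_walkSets [Nonempty V] {A : V → V → Prop}
    (h : IsHelly {S | IsWalkSet A S}) :
    IsHellySystem Set.univ (insert Set.univ ({S | IsWalkSet A S} ∪ Set.range ({·}))) where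
  nonempty_subset := by
    rintro W (rfl | hW | ⟨x, rfl⟩)
    exacts [⟨Set.univ_nonempty, subset_rfl⟩, ⟨IsWalkSet.nonempty hW, Set.subset_univ W⟩,
      ⟨Set.singleton_nonempty x, Set.subset_univ _⟩]
  mem := .inl rfl
  singleton_mem x _ := .inr (.inr ⟨x, rfl⟩)
  unionClosed := IsOverlapUnionClosed.insert_univ <| IsOverlapUnionClosed.union_range_singleton
    fun _ hS _ hS' => IsWalkSet.union hS hS'
  helly := h.union_range_singleton.insert_univ

/-- a connected digraph is walk-Helly iff it admits a tree representation. -/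
theorem stmt7 {V : Type*} [Fintype V] (A : V → V → Prop)
    (hconn : (underGraph A).Connected) :
    WalkHelly A ↔ ∃ T : SimpleGraph V, IsTreeRep A T := by
  have : Nonempty V := hconn.nonempty
  rw [walkHelly_iff_isHelly]
  constructor
  · intro h
    obtain ⟨T, hT, -, hconnected⟩ := h.isHellySystem_walkSets.exists_isForestRepOn
    exact ⟨T, ⟨(SimpleGraph.induceUnivIso T).connected_iff.mp (hconnected _ (.inl rfl)), hT⟩,
      fun S hS => hconnected S (.inr (.inl hS))⟩
  · rintro ⟨T, hT, hS⟩
    exact hT.isHelly_isPathConvex.mono fun S hS' =>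
      hT.isAcyclic.isPathConvex_of_connected_induce (hS S hS')
end
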